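/- arXiv:1209.4071 — 3 statements merged into one kernel-verified Lean document; each statement's English description precedes it below -/
import Mathlib

section
/- Let W : ℕ → ℝ satisfy W(n) = C(n) + C(n-1) + C(n-2) and C(n) = C(n-2) + C(n-3) for all sufficiently large n, where C takes positive values with C(0), C(1), C(2) > 0. Then W(n)^(1/n) converges to the unique positive root α of z^3 - z - 1. -/
/-!
The Padovan recurrence `u (n + 3) = u (n + 1) + u n` is monotone in its initial values, and
`n ↦ c * α ^ n` solves it because `α ^ 3 = α + 1`. Comparing `C` (from the index where its
recurrence starts) with two such geometric solutions squeezes it, and hence `W`, between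
`a * α ^ n` and `b * α ^ n` with `a, b > 0`; taking `n`-th roots gives the limit `α`.
-/

open Filter Topology

def IsPadovanLike {M : Type*} [Add M] (u : ℕ → M) : Prop :=
  ∀ n, u (n + 3) = u (n + 1) + u n

theorem IsPadovanLike.le_of_le_of_lt_three {M : Type*} [AddCommMonoid M] [PartialOrder M]
    [IsOrderedAddMonoid M] {u v : ℕ → M} (hu : IsPadovanLike u) (hv : IsPadovanLike v)
    (h : ∀ k < 3, u k ≤ v k) (n : ℕ) : u n ≤ v n := by
  induction n using Nat.strong_induction_on with
  | _ n ih =>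
    match n with
    | 0 | 1 | 2 => exact h _ (by norm_num)
    | j + 3 =>
      rw [hu j, hv j]
      exact add_le_add (ih (j + 1) (by omega)) (ih j (by omega))

theorem IsPadovanLike.comp_add {M : Type*} [Add M] {u : ℕ → M} (hu : IsPadovanLike u) (N : ℕ) :
    IsPadovanLike fun n => u (n + N) := fun n => by
  simpa only [Nat.add_right_comm] using hu (n + N)

theorem isPadovanLike_const_mul_pow {R : Type*} [CommSemiring R] {α : R} (hα : α ^ 3 = α + 1)
    (c : R) : IsPadovanLike fun n => c * α ^ n := fun n =>
  calc c * α ^ (n + 3) = c * α ^ n * α ^ 3 := by ring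
    _ = c * α ^ (n + 1) + c * α ^ n := by rw [hα]; ring

theorem one_le_of_pow_three_eq_add_one {α : ℝ} (hα : α ^ 3 = α + 1) : 1 ≤ α := by
  nlinarith [sq_nonneg (α - 1), sq_nonneg (α + 1), sq_nonneg α]

theorem exists_pow_bounds_of_eventually_padovan {C : ℕ → ℝ} {α : ℝ} {N : ℕ}
    (hC_pos : ∀ n, 0 < C n) (hα : α ^ 3 = α + 1) (hC : ∀ n ≥ N, C n = C (n - 2) + C (n - 3)) :
    ∃ a b : ℝ, 0 < a ∧ 0 < b ∧ ∀ n ≥ N, a * α ^ n ≤ C n ∧ C n ≤ b * α ^ n := by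
  have hshift : IsPadovanLike fun k => C (k + N) := fun k => by
    simp only [Nat.add_right_comm k 3 N, Nat.add_right_comm k 1 N]
    rw [hC (k + N + 3) (by omega)]
    rfl
  have hα1 := one_le_of_pow_three_eq_add_one hα
  have hαpow : ∀ k, 0 < α ^ k := fun k => pow_pos (by linarith) k
  have hαmono : ∀ {i j : ℕ}, i ≤ j → α ^ i ≤ α ^ j := fun h => pow_le_pow_right₀ hα1 h
  set m := min (C N) (min (C (N + 1)) (C (N + 2)))
  set M := max (C N) (max (C (N + 1)) (C (N + 2)))
  have hm_pos : 0 < m := lt_min (hC_pos _) (lt_min (hC_pos _) (hC_pos _))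
  have hM_pos : 0 < M := (hC_pos N).trans_le (le_max_left _ _)
  have hmM : ∀ k < 3, m ≤ C (k + N) ∧ C (k + N) ≤ M := by
    intro k hk
    interval_cases k <;> simp only [m, M, add_comm _ N] <;> constructor <;> simp
  have hlow : ∀ k, m / α ^ (N + 2) * α ^ (k + N) ≤ C (k + N) := by
    refine ((isPadovanLike_const_mul_pow hα _).comp_add N).le_of_le_of_lt_three hshift
      fun k hk => ?_
    calc m / α ^ (N + 2) * α ^ (k + N)
        ≤ m / α ^ (N + 2) * α ^ (N + 2) :=
          mul_le_mul_of_nonneg_left (hαmono (by omega)) (div_pos hm_pos (hαpow _)).le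
      _ = m := div_mul_cancel₀ _ (hαpow _).ne'
      _ ≤ C (k + N) := (hmM k hk).1
  have hhigh : ∀ k, C (k + N) ≤ M / α ^ N * α ^ (k + N) := by
    refine hshift.le_of_le_of_lt_three ((isPadovanLike_const_mul_pow hα _).comp_add N)
      fun k hk => ?_
    calc C (k + N) ≤ M := (hmM k hk).2
      _ = M / α ^ N * α ^ N := (div_mul_cancel₀ _ (hαpow _).ne').symm
      _ ≤ M / α ^ N * α ^ (k + N) :=
          mul_le_mul_of_nonneg_left (hαmono (by omega)) (div_pos hM_pos (hαpow _)).le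
  refine ⟨m / α ^ (N + 2), M / α ^ N, div_pos hm_pos (hαpow _),
    div_pos hM_pos (hαpow _), fun n hn => ?_⟩
  obtain ⟨k, rfl⟩ : ∃ k, n = k + N := ⟨n - N, by omega⟩
  exact ⟨hlow k, hhigh k⟩

theorem tendsto_const_rpow_one_div_natCast {c : ℝ} (hc : 0 < c) :
    Tendsto (fun n : ℕ => c ^ (1 / (n : ℝ))) atTop (𝓝 1) :=
  (Real.rpow_zero c ▸ (Real.continuousAt_const_rpow hc.ne').tendsto).comp
    (tendsto_const_div_atTop_nhds_zero_nat 1)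

theorem tendsto_const_mul_pow_rpow_one_div {c α : ℝ} (hc : 0 < c) (hα : 0 ≤ α) :
    Tendsto (fun n : ℕ => (c * α ^ n) ^ (1 / (n : ℝ))) atTop (𝓝 α) := by
  have hlim := (tendsto_const_rpow_one_div_natCast hc).mul_const α
  rw [one_mul] at hlim
  refine hlim.congr' ?_
  filter_upwards [eventually_ge_atTop 1] with n hn
  rw [Real.mul_rpow hc.le (by positivity), ← Real.rpow_natCast α n, ← Real.rpow_mul hα,
    mul_one_div_cancel (by positivity), Real.rpow_one]

theorem tendsto_rpow_one_div_of_pow_bounds {u : ℕ → ℝ} {a b α : ℝ} (ha : 0 < a) (hb : 0 < b)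
    (hα : 0 ≤ α) (h : ∀ᶠ n in atTop, a * α ^ n ≤ u n ∧ u n ≤ b * α ^ n) :
    Tendsto (fun n : ℕ => u n ^ (1 / (n : ℝ))) atTop (𝓝 α) := by
  refine tendsto_of_tendsto_of_tendsto_of_le_of_le'
    (tendsto_const_mul_pow_rpow_one_div ha hα) (tendsto_const_mul_pow_rpow_one_div hb hα)
    ?_ ?_ <;> filter_upwards [h] with n ⟨hlow, hhigh⟩
  · exact Real.rpow_le_rpow (by positivity) hlow (by positivity)
  · exact Real.rpow_le_rpow ((by positivity : 0 ≤ a * α ^ n).trans hlow) hhigh (by positivity)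

theorem growth_rate_plastic_recurrence_general (W C : ℕ → ℝ) (α : ℝ)
    (hα_root : α ^ 3 - α - 1 = 0)
    (hC_pos : ∀ n, 0 < C n)
    (hW : ∃ N, ∀ n ≥ N, W n = C n + C (n - 1) + C (n - 2))
    (hC : ∃ N, ∀ n ≥ N, C n = C (n - 2) + C (n - 3)) :
    Tendsto (fun n : ℕ => W n ^ (1 / (n : ℝ))) atTop (nhds α) := by
  obtain ⟨N₁, hW⟩ := hW
  obtain ⟨N, hC⟩ := hC
  have hα : α ^ 3 = α + 1 := by linear_combination hα_root
  have hα1 := one_le_of_pow_three_eq_add_one hα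
  obtain ⟨a, b, ha, hb, hbounds⟩ := exists_pow_bounds_of_eventually_padovan hC_pos hα hC
  refine tendsto_rpow_one_div_of_pow_bounds ha (by positivity : 0 < 3 * b)
    (zero_le_one.trans hα1) ?_
  filter_upwards [eventually_ge_atTop (N₁ + N + 2)] with n hn
  have hCle : ∀ i ≤ 2, C (n - i) ≤ b * α ^ n := fun i hi =>
    (hbounds (n - i) (by omega)).2.trans (by gcongr; exact Nat.sub_le n i)
  rw [hW n (by omega)]
  refine ⟨?_, ?_⟩
  · linarith [(hbounds n (by omega)).1, hC_pos (n - 1), hC_pos (n - 2)]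
  · have hCn := hCle 0 (by norm_num)
    rw [Nat.sub_zero] at hCn
    linarith [hCle 1 (by norm_num), hCle 2 (by norm_num)]

/-- If `W n = C n + C (n-1) + C (n-2)` and `C n = C (n-2) + C (n-3)` for all sufficiently
large `n`, where `C` takes positive values (in particular `C 0, C 1, C 2 > 0`), then
`W n ^ (1/n)` converges to the unique positive root `α` of `z^3 - z - 1`. -/
theorem growth_rate_plastic_recurrence (W C : ℕ → ℝ) (α : ℝ)
    (hα_pos : 0 < α) (hα_root : α ^ 3 - α - 1 = 0)
    (hC_pos : ∀ n, 0 < C n) (hC0 : 0 < C 0) (hC1 : 0 < C 1) (hC2 : 0 < C 2)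
    (hW : ∃ N, ∀ n ≥ N, W n = C n + C (n - 1) + C (n - 2))
    (hC : ∃ N, ∀ n ≥ N, C n = C (n - 2) + C (n - 3)) :
    Tendsto (fun n : ℕ => W n ^ (1 / (n : ℝ))) atTop (nhds α) :=
  growth_rate_plastic_recurrence_general W C α hα_root hC_pos hW hC
end

section
/- If a group G with finite generating set S contains elements x_1, ..., x_k that generate a free monoid (the submonoid generated by x_1,...,x_k is free on these generators), with word lengths ℓ_S(x_i) = ℓ_i, then the exponential growth rate ω(G,S) is at least the unique positive root of z^m - Σ_{i=1}^k z^{m-ℓ_i}, where m = max ℓ_i. -/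
/-!
Words in the letters `x i`, where the letter `i` is given the weight `ℓ i`, embed by freeness into
the ball of radius equal to their weight. The number `A n` of words of weight at most `n`
satisfies `A n ≥ ∑ i, A (n - ℓ i)` for `n ≥ m`, and as `r ^ m = ∑ i, r ^ (m - ℓ i)`, strong
induction gives `r ^ (n + 1) ≤ r ^ m * A n`. Hence the growth function is at least a positive
multiple of `r ^ n`, and taking `n`-th roots yields `r ≤ ω`. (If `r ≤ 1` there is nothing to
prove, since `ω ≥ 1`.)
-/

open Filter

/-- The word length of `g` with respect to a generating set `S` (using letters from
`S ∪ S⁻¹`). -/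
noncomputable def wordLength {G : Type*} [Group G] (S : Set G) (g : G) : ℕ :=
  sInf {n | ∃ l : List G, l.length = n ∧ (∀ x ∈ l, x ∈ S ∨ x⁻¹ ∈ S) ∧ l.prod = g}

/-- The growth function `F_{G,S}(n)`, counting elements of word length at most `n`. -/
noncomputable def growthFunction {G : Type*} [Group G] (S : Set G) (n : ℕ) : ℕ :=
  Nat.card {g : G | wordLength S g ≤ n}

section WordLength

variable {G : Type*} [Group G] {S : Set G}

lemma exists_list_prod_eq_of_closure_eq_top (hS : Subgroup.closure S = ⊤) (g : G) :
    ∃ l : List G, (∀ y ∈ l, y ∈ S ∨ y⁻¹ ∈ S) ∧ l.prod = g := by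
  have hg : g ∈ Submonoid.closure (S ∪ S⁻¹) := by
    rw [← Subgroup.closure_toSubmonoid, hS]
    trivial
  obtain ⟨l, hl, hprod⟩ := Submonoid.exists_list_of_mem_closure hg
  exact ⟨l, hl, hprod⟩

lemma exists_list_length_eq_wordLength (hS : Subgroup.closure S = ⊤) (g : G) :
    ∃ l : List G, l.length = wordLength S g ∧ (∀ y ∈ l, y ∈ S ∨ y⁻¹ ∈ S) ∧ l.prod = g := by
  obtain ⟨l, hl, hprod⟩ := exists_list_prod_eq_of_closure_eq_top hS g
  exact Nat.sInf_mem
    (s := {n | ∃ l : List G, l.length = n ∧ (∀ x ∈ l, x ∈ S ∨ x⁻¹ ∈ S) ∧ l.prod = g})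
    ⟨l.length, l, rfl, hl, hprod⟩

lemma wordLength_le_length {l : List G} (hl : ∀ y ∈ l, y ∈ S ∨ y⁻¹ ∈ S) :
    wordLength S l.prod ≤ l.length :=
  Nat.sInf_le ⟨l, rfl, hl, rfl⟩

@[simp]
lemma wordLength_one : wordLength S 1 = 0 :=
  Nat.le_zero.mp (wordLength_le_length (l := []) (by simp))

lemma eq_one_of_wordLength_eq_zero (hS : Subgroup.closure S = ⊤) {g : G}
    (hg : wordLength S g = 0) : g = 1 := by
  obtain ⟨l, hlen, -, rfl⟩ := exists_list_length_eq_wordLength hS g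
  rw [hg, List.length_eq_zero_iff] at hlen
  simp [hlen]

lemma wordLength_mul_le (hS : Subgroup.closure S = ⊤) (g h : G) :
    wordLength S (g * h) ≤ wordLength S g + wordLength S h := by
  obtain ⟨l₁, hlen₁, hl₁, rfl⟩ := exists_list_length_eq_wordLength hS g
  obtain ⟨l₂, hlen₂, hl₂, rfl⟩ := exists_list_length_eq_wordLength hS h
  rw [← List.prod_append, ← hlen₁, ← hlen₂, ← List.length_append]
  exact wordLength_le_length fun y hy => (List.mem_append.mp hy).elim (hl₁ y) (hl₂ y)

lemma wordLength_list_prod_le (hS : Subgroup.closure S = ⊤) (l : List G) :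
    wordLength S l.prod ≤ (l.map (wordLength S)).sum := by
  induction l with
  | nil => simp
  | cons a t ih =>
    rw [List.prod_cons, List.map_cons, List.sum_cons]
    exact (wordLength_mul_le hS a t.prod).trans (Nat.add_le_add_left ih _)

lemma finite_setOf_wordLength_le (hS : Subgroup.closure S = ⊤) (hSfin : S.Finite) (n : ℕ) :
    {g : G | wordLength S g ≤ n}.Finite := by
  have : Finite ↥(S ∪ S⁻¹) := hSfin.union hSfin.inv
  refine ((List.finite_length_le ↥(S ∪ S⁻¹) n).image fun l => (l.map Subtype.val).prod).subset ?_
  intro g hg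
  obtain ⟨l, hlen, hl, rfl⟩ := exists_list_length_eq_wordLength hS g
  have hl' : ∀ y ∈ l, y ∈ S ∪ S⁻¹ := hl
  refine ⟨l.pmap Subtype.mk hl', by simpa [hlen] using hg, ?_⟩
  simp only [List.map_pmap, List.pmap_eq_map, List.map_id']

lemma one_le_growthFunction (hS : Subgroup.closure S = ⊤) (hSfin : S.Finite) (n : ℕ) :
    1 ≤ growthFunction S n := by
  have := (finite_setOf_wordLength_le hS hSfin n).to_subtype
  have : Nonempty {g : G | wordLength S g ≤ n} := ⟨⟨1, by simp⟩⟩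
  exact Nat.card_pos

lemma ncard_le_growthFunction (hS : Subgroup.closure S = ⊤) (hSfin : S.Finite)
    {α : Type*} {s : Set α} {f : α → G} (hf : Set.InjOn f s) {n : ℕ}
    (hfs : ∀ a ∈ s, wordLength S (f a) ≤ n) :
    s.ncard ≤ growthFunction S n := by
  rw [growthFunction, Nat.card_coe_set_eq]
  exact Set.ncard_le_ncard_of_injOn f hfs hf (finite_setOf_wordLength_le hS hSfin n)

end WordLength

section WeightedWords

variable {α : Type*}

def weightedWords (w : α → ℕ) (n : ℕ) : Set (List α) :=
  {u | (u.map w).sum ≤ n}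

variable {w : α → ℕ}

lemma finite_weightedWords [Finite α] (hw : ∀ a, 0 < w a) (n : ℕ) :
    (weightedWords w n).Finite :=
  (List.finite_length_le α n).subset fun u hu =>
    calc u.length = (u.map w).length := (List.length_map _).symm
      _ ≤ (u.map w).sum := List.length_le_sum_of_one_le _ (List.forall_mem_map.mpr fun a _ => hw a)
      _ ≤ n := hu

lemma one_le_ncard_weightedWords [Finite α] (hw : ∀ a, 0 < w a) (n : ℕ) :
    1 ≤ (weightedWords w n).ncard :=
  (Set.ncard_pos (finite_weightedWords hw n)).mpr ⟨[], by simp [weightedWords]⟩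

lemma cons_mem_weightedWords {a : α} {u : List α} {n : ℕ} (ha : w a ≤ n)
    (hu : u ∈ weightedWords w (n - w a)) : a :: u ∈ weightedWords w n := by
  have hu : (u.map w).sum ≤ n - w a := hu
  show ((a :: u).map w).sum ≤ n
  rw [List.map_cons, List.sum_cons]
  omega

-- Prepending the letter `a` embeds words of weight `≤ n - w a` into those of weight `≤ n`,
-- with disjoint images for distinct letters.
lemma sum_ncard_weightedWords_sub_le [Fintype α] (hw : ∀ a, 0 < w a) {n : ℕ}
    (hn : ∀ a, w a ≤ n) :
    ∑ a, (weightedWords w (n - w a)).ncard ≤ (weightedWords w n).ncard := by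
  have := fun a => (finite_weightedWords hw (n - w a)).to_subtype
  have := (finite_weightedWords hw n).to_subtype
  simp only [← Nat.card_coe_set_eq, ← Nat.card_sigma]
  refine Nat.card_le_card_of_injective
    (fun p => ⟨p.1 :: p.2.1, cons_mem_weightedWords (hn p.1) p.2.2⟩) ?_
  rintro ⟨a, u, hu⟩ ⟨b, v, hv⟩ h
  simp only [Subtype.mk.injEq, List.cons.injEq] at h
  obtain ⟨rfl, rfl⟩ := h
  rfl

end WeightedWords

lemma pow_succ_le_mul_of_sum_le {ι : Type*} [Fintype ι] {ℓ : ι → ℕ} {m : ℕ}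
    (hℓ_pos : ∀ i, 0 < ℓ i) (hℓm : ∀ i, ℓ i ≤ m) {r : ℝ} (hr : 1 ≤ r)
    (hroot : r ^ m = ∑ i, r ^ (m - ℓ i)) {a : ℕ → ℝ} (ha : ∀ n, 1 ≤ a n)
    (hrec : ∀ n, m ≤ n → ∑ i, a (n - ℓ i) ≤ a n) (n : ℕ) :
    r ^ (n + 1) ≤ r ^ m * a n := by
  induction n using Nat.strong_induction_on with
  | _ n ih =>
  rcases lt_or_ge n m with hnm | hmn
  · calc r ^ (n + 1) ≤ r ^ m := pow_le_pow_right₀ hr hnm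
      _ ≤ r ^ m * a n := le_mul_of_one_le_right (by positivity) (ha n)
  · calc r ^ (n + 1) = ∑ i, r ^ (n - ℓ i + 1) := by
          rw [show n + 1 = (n + 1 - m) + m by omega, pow_add, hroot, Finset.mul_sum]
          refine Finset.sum_congr rfl fun i _ => ?_
          rw [← pow_add]
          have := hℓm i
          congr 1
          omega
      _ ≤ ∑ i, r ^ m * a (n - ℓ i) :=
          Finset.sum_le_sum fun i _ => ih _ (Nat.sub_lt_self (hℓ_pos i) ((hℓm i).trans hmn))
      _ = r ^ m * ∑ i, a (n - ℓ i) := (Finset.mul_sum ..).symm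
      _ ≤ r ^ m * a n := mul_le_mul_of_nonneg_left (hrec n hmn) (by positivity)

lemma le_of_tendsto_rpow_of_const_mul_pow_le {f : ℕ → ℝ} {c r ω : ℝ} (hc : 0 < c) (hr : 0 ≤ r)
    (hf : ∀ n, c * r ^ n ≤ f n)
    (hω : Tendsto (fun n : ℕ => f n ^ (1 / (n : ℝ))) atTop (nhds ω)) : r ≤ ω := by
  have hlim : Tendsto (fun n : ℕ => c ^ (1 / (n : ℝ)) * r) atTop (nhds r) := by
    have := ((Real.continuousAt_const_rpow hc.ne').tendsto.comp
      tendsto_one_div_atTop_nhds_zero_nat).mul_const r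
    simpa [Function.comp_def] using this
  refine le_of_tendsto_of_tendsto hlim hω ?_
  filter_upwards [eventually_ne_atTop 0] with n hn
  calc c ^ (1 / (n : ℝ)) * r = (c * r ^ n) ^ (1 / (n : ℝ)) := by
        rw [Real.mul_rpow hc.le (by positivity), ← Real.rpow_natCast, ← Real.rpow_mul hr,
          mul_one_div_cancel (by exact_mod_cast hn), Real.rpow_one]
    _ ≤ f n ^ (1 / (n : ℝ)) := Real.rpow_le_rpow (by positivity) (hf n) (by positivity)

lemma ncard_weightedWords_le_growthFunction {G : Type*} [Group G] {S : Set G}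
    (hS : Subgroup.closure S = ⊤) (hSfin : S.Finite) {ι : Type*} {x : ι → G}
    (hfree : ∀ u v : List ι, (u.map x).prod = (v.map x).prod → u = v) {ℓ : ι → ℕ}
    (hℓ : ∀ i, wordLength S (x i) ≤ ℓ i) (n : ℕ) :
    (weightedWords ℓ n).ncard ≤ growthFunction S n := by
  refine ncard_le_growthFunction hS hSfin (fun u _ v _ huv => hfree u v huv) fun u hu => ?_
  calc wordLength S (u.map x).prod ≤ ((u.map x).map (wordLength S)).sum :=
        wordLength_list_prod_le hS _
    _ ≤ (u.map ℓ).sum := by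
        rw [List.map_map]
        exact List.sum_le_sum fun i _ => hℓ i
    _ ≤ n := hu

theorem growth_rate_ge_root_of_free_monoid_general {G : Type*} [Group G]
    (S : Finset G) (hS : Subgroup.closure (S : Set G) = ⊤)
    (k : ℕ) (x : Fin k → G)
    (hfree : ∀ u v : List (Fin k), (u.map x).prod = (v.map x).prod → u = v)
    (ℓ : Fin k → ℕ) (hℓ : ∀ i, ℓ i = wordLength (S : Set G) (x i))
    (m : ℕ) (hm : m = Finset.univ.sup ℓ)
    (r : ℝ) (hr_root : r ^ m - ∑ i, r ^ (m - ℓ i) = 0)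
    (ω : ℝ)
    (hω : Tendsto (fun n : ℕ => (growthFunction (S : Set G) n : ℝ) ^ (1 / (n : ℝ)))
      atTop (nhds ω)) :
    r ≤ ω := by
  have hSfin := S.finite_toSet
  have hω_ge_one : 1 ≤ ω := ge_of_tendsto hω <| Eventually.of_forall fun n =>
    Real.one_le_rpow (by exact_mod_cast one_le_growthFunction hS hSfin n) (by positivity)
  rcases le_or_gt r 1 with hr | hr
  · exact hr.trans hω_ge_one
  have hℓ_pos : ∀ i, 0 < ℓ i := fun i => Nat.pos_of_ne_zero fun h => by
    simpa [eq_one_of_wordLength_eq_zero hS ((hℓ i).symm.trans h)] using hfree [i] []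
  have hℓm : ∀ i, ℓ i ≤ m := fun i => hm ▸ Finset.le_sup (Finset.mem_univ i)
  have hwords := pow_succ_le_mul_of_sum_le hℓ_pos hℓm hr.le (sub_eq_zero.mp hr_root)
    (a := fun n => ((weightedWords ℓ n).ncard : ℝ))
    (fun n => by exact_mod_cast one_le_ncard_weightedWords hℓ_pos n)
    (fun n hn => by exact_mod_cast sum_ncard_weightedWords_sub_le hℓ_pos (hℓm · |>.trans hn))
  refine le_of_tendsto_rpow_of_const_mul_pow_le (c := r / r ^ m) (by positivity) (by positivity)
    (fun n => ?_) hω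
  calc r / r ^ m * r ^ n = r ^ (n + 1) / r ^ m := by ring
    _ ≤ (weightedWords ℓ n).ncard := (div_le_iff₀' (by positivity)).mpr (hwords n)
    _ ≤ growthFunction (S : Set G) n := by
        exact_mod_cast ncard_weightedWords_le_growthFunction hS hSfin hfree (hℓ · |>.ge) n

/-- If a group `G` with finite generating set `S` contains elements `x 0, …, x (k-1)`
generating a free monoid on these generators, with word lengths `ℓ i = ℓ_S (x i)` and
`m = max ℓ i`, then the exponential growth rate `ω(G,S)` is at least the unique positive
root of `z^m - ∑ i, z^(m - ℓ i)`. -/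
theorem growth_rate_ge_root_of_free_monoid {G : Type*} [Group G]
    (S : Finset G) (hS : Subgroup.closure (S : Set G) = ⊤)
    (k : ℕ) (hk : 0 < k) (x : Fin k → G)
    (hfree : ∀ u v : List (Fin k), (u.map x).prod = (v.map x).prod → u = v)
    (ℓ : Fin k → ℕ) (hℓ : ∀ i, ℓ i = wordLength (S : Set G) (x i))
    (m : ℕ) (hm : m = Finset.univ.sup ℓ)
    (r : ℝ) (hr_pos : 0 < r) (hr_root : r ^ m - ∑ i, r ^ (m - ℓ i) = 0)
    (ω : ℝ)
    (hω : Tendsto (fun n : ℕ => (growthFunction (S : Set G) n : ℝ) ^ (1 / (n : ℝ)))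
      atTop (nhds ω)) :
    r ≤ ω :=
  growth_rate_ge_root_of_free_monoid_general S hS k x hfree ℓ hℓ m hm r hr_root ω hω
end

section
/- In the Coxeter group G = ⟨a, b, c | a² = b² = c² = (ab)² = (ac)³ = 1⟩ ≅ PGL(2,ℤ), every element has a unique minimal-length expression of the form U(a,b) or U(a,b)·c·s₁·c·s₂·c ⋯ c·V(a,b), where each s_i ∈ {b, ab} and U(a,b), V(a,b) ∈ {empty, a, b, ab}. -/
/-- Relators of `PGL(2,ℤ) = ⟨a, b, c ∣ a² = b² = c² = (ab)² = (ac)³ = 1⟩`,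
with `0 ↦ a`, `1 ↦ b`, `2 ↦ c`. -/
def pglRels : Set (FreeGroup (Fin 3)) :=
  {FreeGroup.of 0 ^ 2, FreeGroup.of 1 ^ 2, FreeGroup.of 2 ^ 2,
   (FreeGroup.of 0 * FreeGroup.of 1) ^ 2, (FreeGroup.of 0 * FreeGroup.of 2) ^ 3}

namespace PglNormalForm

open PresentedGroup

abbrev G := PresentedGroup pglRels

local notation "a" => (of 0 : G)
local notation "b" => (of 1 : G)
local notation "c" => (of 2 : G)

lemma of_mul_self (i : Fin 3) : (of i : G) * of i = 1 := by
  have h : mk pglRels (FreeGroup.of i ^ 2) = 1 :=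
    one_of_mem (by fin_cases i <;> simp [pglRels])
  rwa [map_pow, pow_two] at h

lemma of_mul_of_mul_self (i : Fin 3) (x : G) : of i * (of i * x) = x := by
  rw [← mul_assoc, of_mul_self, one_mul]

lemma of_inv (i : Fin 3) : (of i : G)⁻¹ = of i :=
  inv_eq_of_mul_eq_one_right (of_mul_self i)

lemma a_mul_b : a * b = b * a := by
  have h : mk pglRels ((FreeGroup.of 0 * FreeGroup.of 1) ^ 2) = 1 :=
    one_of_mem (by simp [pglRels])
  change (a * b) * (a * b) = 1 at h
  rw [mul_eq_one_iff_eq_inv.mp h, mul_inv_rev, of_inv, of_inv]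

lemma a_mul_b_mul (x : G) : a * (b * x) = b * (a * x) := by
  rw [← mul_assoc, a_mul_b, mul_assoc]

lemma c_mul_a_mul_c : c * (a * c) = a * (c * a) := by
  have h : mk pglRels ((FreeGroup.of 0 * FreeGroup.of 2) ^ 3) = 1 :=
    one_of_mem (by simp [pglRels])
  change (a * c) * ((a * c) * (a * c)) = 1 at h
  have hacac : (a * c) * (a * c) = c * a := by
    rw [eq_inv_of_mul_eq_one_right h, mul_inv_rev, of_inv, of_inv]
  rw [← hacac]
  simp only [mul_assoc, of_mul_of_mul_self]

lemma c_mul_a_mul_c_mul (x : G) : c * (a * (c * x)) = a * (c * (a * x)) := by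
  rw [← mul_assoc a, ← mul_assoc c, c_mul_a_mul_c, mul_assoc, mul_assoc]

/-- `(x, y)` stands for `a^x b^y`. -/
abbrev ABCode := Bool × Bool

/-- `(U, none)` stands for `U`, and `(U, some (ms, V))` for `U c s₁ c ⋯ sₖ c V` with
`sᵢ = a^{mᵢ} b`. -/
abbrev NormalForm := ABCode × Option (List Bool × ABCode)

namespace NormalForm

def abLetters : ABCode → List (Fin 3)
  | (x, y) => (if x then [0] else []) ++ (if y then [1] else [])

def sLetters (m : Bool) : List (Fin 3) := (if m then [0] else []) ++ [1]

def letters : NormalForm → List (Fin 3)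
  | (U, none) => abLetters U
  | (U, some (ms, V)) =>
      abLetters U ++ 2 :: (ms.map fun m => sLetters m ++ [2]).flatten ++ abLetters V

def word (n : NormalForm) : List G := n.letters.map of

def empty : NormalForm := ((false, false), none)

def actA : NormalForm → NormalForm
  | ((x, y), t) => ((!x, y), t)

def actB : NormalForm → NormalForm
  | ((x, y), t) => ((x, !y), t)

def actC : NormalForm → NormalForm
  | (U, none) => ((false, false), some ([], U))
  | ((false, false), some ([], V)) => (V, none)
  | ((false, false), some (m :: ms, V)) => ((m, true), some (ms, V))
  -- `c · a c ⋯ = a c · a ⋯` since `c a c = a c a`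
  | ((true, false), some ([], (x, y))) => ((true, false), some ([], (!x, y)))
  | ((true, false), some (m :: ms, V)) => ((true, false), some ((!m) :: ms, V))
  | ((x, true), some (ms, V)) => ((false, false), some (x :: ms, V))

def act : Fin 3 → NormalForm → NormalForm
  | 0 => actA
  | 1 => actB
  | 2 => actC

lemma act_involutive (i : Fin 3) : Function.Involutive (act i) := by
  fin_cases i <;>
    rintro ⟨⟨_ | _, _ | _⟩, _ | ⟨_ | ⟨_ | _, _ | _⟩, _ | _, _ | _⟩⟩ <;> rfl

lemma act_a_b_a_b (n : NormalForm) : act 0 (act 1 (act 0 (act 1 n))) = n := by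
  rcases n with ⟨⟨_ | _, _ | _⟩, _⟩ <;> rfl

lemma act_a_c_a_c_a_c (n : NormalForm) :
    act 0 (act 2 (act 0 (act 2 (act 0 (act 2 n))))) = n := by
  rcases n with ⟨⟨_ | _, _ | _⟩, _ | ⟨_ | ⟨_ | _, _ | _⟩, _ | _, _ | _⟩⟩ <;> rfl

def actPerm (i : Fin 3) : Equiv.Perm NormalForm := (act_involutive i).toPerm

lemma lift_actPerm_eq_one : ∀ r ∈ pglRels, FreeGroup.lift actPerm r = 1 := by
  rintro r (rfl | rfl | rfl | rfl | rfl) <;> ext1 n <;>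
    simp only [map_mul, FreeGroup.lift_apply_of, pow_succ, pow_zero, one_mul,
      Equiv.Perm.mul_apply, Equiv.Perm.one_apply, actPerm, Function.Involutive.coe_toPerm]
  exacts [act_involutive 0 n, act_involutive 1 n, act_involutive 2 n, act_a_b_a_b n,
    act_a_c_a_c_a_c n]

def actionHom : G →* Equiv.Perm NormalForm := toGroup lift_actPerm_eq_one

lemma actionHom_of (i : Fin 3) (n : NormalForm) : actionHom (of i) n = act i n := by
  simp [actionHom, actPerm]

lemma actionHom_prod_map_of (l : List (Fin 3)) (n : NormalForm) :
    actionHom (l.map of).prod n = l.foldr act n := by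
  induction l with
  | nil => rfl
  | cons i l ih => simp [actionHom_of, ih]

lemma foldr_act_abLetters (U : ABCode) (t : Option (List Bool × ABCode)) :
    (abLetters U).foldr act ((false, false), t) = (U, t) := by
  rcases U with ⟨_ | _, _ | _⟩ <;> rfl

lemma foldr_act_letters_some (ms : List Bool) (V : ABCode) :
    (2 :: (ms.map fun m => sLetters m ++ [2]).flatten ++ abLetters V).foldr act empty =
      ((false, false), some (ms, V)) := by
  induction ms with
  | nil =>
    rcases V with ⟨_ | _, _ | _⟩ <;> rfl
  | cons m ms ih =>
    have hsplit : 2 :: ((m :: ms).map fun m => sLetters m ++ [2]).flatten ++ abLetters V =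
        (2 :: sLetters m) ++
          (2 :: (ms.map fun m => sLetters m ++ [2]).flatten ++ abLetters V) := by
      simp
    rw [hsplit, List.foldr_append, ih]
    cases m <;> cases ms <;> rfl

lemma foldr_act_letters (n : NormalForm) : n.letters.foldr act empty = n := by
  rcases n with ⟨U, _ | ⟨ms, V⟩⟩
  · exact foldr_act_abLetters U none
  · rw [letters, List.append_assoc, List.foldr_append, foldr_act_letters_some,
      foldr_act_abLetters]

lemma actionHom_prod_word (n : NormalForm) : actionHom n.word.prod empty = n := by
  rw [word, actionHom_prod_map_of, foldr_act_letters]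

lemma prod_word_act (i : Fin 3) (n : NormalForm) :
    (act i n).word.prod = of i * n.word.prod := by
  rcases n with ⟨⟨_ | _, _ | _⟩, _ | ⟨_ | ⟨_ | _, _ | _⟩, _ | _, _ | _⟩⟩ <;> fin_cases i <;>
    simp [act, actA, actB, actC, word, letters, abLetters, sLetters, of_mul_self,
      of_mul_of_mul_self, a_mul_b, a_mul_b_mul, c_mul_a_mul_c, c_mul_a_mul_c_mul]

lemma prod_word_actionHom (g : G) (n : NormalForm) :
    (actionHom g n).word.prod = g * n.word.prod := by
  induction (closure_range_of pglRels).ge (Subgroup.mem_top g) using Subgroup.closure_induction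
    generalizing n with
  | mem _ h =>
    obtain ⟨i, rfl⟩ := h
    rw [actionHom_of, prod_word_act]
  | one => simp
  | mul g h _ _ hg hh => rw [map_mul, Equiv.Perm.mul_apply, hg, hh, mul_assoc]
  | inv g _ hg =>
    rw [eq_inv_mul_iff_mul_eq, ← hg, ← Equiv.Perm.mul_apply, ← map_mul, mul_inv_cancel,
      map_one, Equiv.Perm.one_apply]

lemma length_letters_act_le (i : Fin 3) (n : NormalForm) :
    (act i n).letters.length ≤ n.letters.length + 1 := by
  rcases n with ⟨⟨_ | _, _ | _⟩, _ | ⟨_ | ⟨_ | _, _⟩, _ | _, _ | _⟩⟩ <;> fin_cases i <;>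
    simp [act, actA, actB, actC, letters, abLetters, sLetters]

lemma length_letters_actionHom_prod_le (l : List (Fin 3)) (n : NormalForm) :
    (actionHom (l.map of).prod n).letters.length ≤ n.letters.length + l.length := by
  rw [actionHom_prod_map_of]
  induction l with
  | nil => simp
  | cons i l ih =>
    grw [List.foldr_cons, length_letters_act_le, ih, List.length_cons, add_assoc]

end NormalForm

open NormalForm

def normalForm (g : G) : NormalForm := actionHom g empty

lemma normalForm_prod_word (n : NormalForm) : normalForm n.word.prod = n :=
  actionHom_prod_word n

lemma prod_word_normalForm (g : G) : (normalForm g).word.prod = g := by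
  rw [normalForm, prod_word_actionHom]
  exact mul_one g

lemma mem_range_of {x : G} (hx : x ∈ ({a, b, c} : Set G) ∨ x⁻¹ ∈ ({a, b, c} : Set G)) :
    x ∈ Set.range of := by
  simp only [Set.mem_insert_iff, Set.mem_singleton_iff, inv_eq_iff_eq_inv, of_inv,
    or_self] at hx
  rcases hx with rfl | rfl | rfl
  exacts [⟨0, rfl⟩, ⟨1, rfl⟩, ⟨2, rfl⟩]

lemma length_word_normalForm (g : G) :
    (normalForm g).word.length = wordLength {a, b, c} g := by
  have hletters :
      ∀ x ∈ (normalForm g).word, x ∈ ({a, b, c} : Set G) ∨ x⁻¹ ∈ ({a, b, c} : Set G) := by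
    simp only [word, List.mem_map]
    rintro _ ⟨i, -, rfl⟩
    fin_cases i <;> simp
  refine le_antisymm (le_csInf ⟨_, _, rfl, hletters, prod_word_normalForm g⟩ ?_)
    (Nat.sInf_le ⟨_, rfl, hletters, prod_word_normalForm g⟩)
  rintro _ ⟨l, rfl, hl, rfl⟩
  obtain ⟨l, rfl⟩ : l ∈ Set.range (List.map of) := by
    rw [Set.range_list_map]
    exact fun x hx => mem_range_of (hl x hx)
  simpa [word, normalForm, empty, letters, abLetters] using
    length_letters_actionHom_prod_le l empty

def abWord (U : ABCode) : List G := (abLetters U).map of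

def sWord (m : Bool) : List G := (sLetters m).map of

lemma word_some (U : ABCode) (ms : List Bool) (V : ABCode) :
    word (U, some (ms, V)) =
      abWord U ++ [c] ++ ((ms.map sWord).map fun s => s ++ [c]).flatten ++ abWord V := by
  simp [word, letters, abWord, sWord, List.map_flatten, Function.comp_def]

def IsABWord (U : List G) : Prop := U = [] ∨ U = [a] ∨ U = [b] ∨ U = [a, b]

def IsNormalWord (w : List G) : Prop :=
  (∃ U, IsABWord U ∧ w = U) ∨
    (∃ U V, ∃ ss : List (List G), IsABWord U ∧ IsABWord V ∧
      (∀ s ∈ ss, s = [b] ∨ s = [a, b]) ∧ w = U ++ [c] ++ (ss.map fun s => s ++ [c]).flatten ++ V)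

lemma isABWord_iff_mem_range {U : List G} : IsABWord U ↔ U ∈ Set.range abWord := by
  constructor
  · rintro (rfl | rfl | rfl | rfl)
    exacts [⟨(false, false), rfl⟩, ⟨(true, false), rfl⟩, ⟨(false, true), rfl⟩,
      ⟨(true, true), rfl⟩]
  · rintro ⟨⟨_ | _, _ | _⟩, rfl⟩ <;> simp [IsABWord, abWord, abLetters]

lemma mem_range_sWord_iff {s : List G} : s ∈ Set.range sWord ↔ s = [b] ∨ s = [a, b] := by
  constructor
  · rintro ⟨_ | _, rfl⟩ <;> simp [sWord, sLetters]
  · rintro (rfl | rfl)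
    exacts [⟨false, rfl⟩, ⟨true, rfl⟩]

lemma isNormalWord_iff_mem_range {w : List G} : IsNormalWord w ↔ w ∈ Set.range word := by
  have hss {ss : List (List G)} :
      (∀ s ∈ ss, s = [b] ∨ s = [a, b]) ↔ ss ∈ Set.range (List.map sWord) := by
    simp only [Set.range_list_map, Set.mem_ofPred_eq, mem_range_sWord_iff]
  simp only [IsNormalWord, isABWord_iff_mem_range, hss]
  constructor
  · rintro (⟨_, ⟨U, rfl⟩, rfl⟩ | ⟨_, _, _, ⟨U, rfl⟩, ⟨V, rfl⟩, ⟨ms, rfl⟩, rfl⟩)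
    exacts [⟨(U, none), rfl⟩, ⟨(U, some (ms, V)), word_some U ms V⟩]
  · rintro ⟨⟨U, _ | ⟨ms, V⟩⟩, rfl⟩
    exacts [Or.inl ⟨_, ⟨U, rfl⟩, rfl⟩,
      Or.inr ⟨_, _, _, ⟨U, rfl⟩, ⟨V, rfl⟩, ⟨ms, rfl⟩, word_some U ms V⟩]

end PglNormalForm

/-- In the Coxeter group `G = ⟨a, b, c ∣ a² = b² = c² = (ab)² = (ac)³ = 1⟩ ≅ PGL(2,ℤ)`,
every element has a unique minimal-length expression of the form `U(a,b)` or
`U(a,b)·c·s₁·c·s₂·c ⋯ c·V(a,b)`, where each `sᵢ ∈ {b, ab}` and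
`U(a,b), V(a,b) ∈ {∅, a, b, ab}`. -/
theorem pgl_normal_form :
    ∀ g : PresentedGroup pglRels,
      letI a : PresentedGroup pglRels := PresentedGroup.of 0
      letI b : PresentedGroup pglRels := PresentedGroup.of 1
      letI c : PresentedGroup pglRels := PresentedGroup.of 2
      letI UV : List (PresentedGroup pglRels) → Prop :=
        fun U => U = [] ∨ U = [a] ∨ U = [b] ∨ U = [a, b]
      ∃! w : List (PresentedGroup pglRels),
        ((∃ U, UV U ∧ w = U) ∨
          (∃ U, ∃ V, ∃ ss : List (List (PresentedGroup pglRels)), UV U ∧ UV V ∧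
            (∀ s ∈ ss, s = [b] ∨ s = [a, b]) ∧
            w = U ++ [c] ++ (ss.map fun s => s ++ [c]).flatten ++ V)) ∧
        w.prod = g ∧ w.length = wordLength {a, b, c} g := by
  intro g
  refine ⟨(PglNormalForm.normalForm g).word,
    ⟨PglNormalForm.isNormalWord_iff_mem_range.2 ⟨_, rfl⟩, PglNormalForm.prod_word_normalForm g,
      PglNormalForm.length_word_normalForm g⟩, ?_⟩
  rintro w ⟨hw, rfl, -⟩
  obtain ⟨n, rfl⟩ := PglNormalForm.isNormalWord_iff_mem_range.1 hw
  rw [PglNormalForm.normalForm_prod_word]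
end
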